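/- Let A be an n×n real Hurwitz matrix (all eigenvalues have negative real part), B ∈ ℝ^{n×m}, C ∈ ℝ^{p×n}, and suppose P is symmetric positive semidefinite with AᵀP + PA + CᵀC ≤ 0 and P ≤ qI for some q ≥ 0. Then ∑_{i=1}^{m} ∫₀^∞ ‖C e^{Aτ} B_i‖² dτ ≤ q · Tr(BᵀB), where B_i denotes the i-th column of B. -/

import Mathlib

/-!
Along the trajectory `x τ = exp (τ • A) *ᵥ b` the storage function `V = xᵀ P x` has
derivative `xᵀ (Aᵀ P + P A) x ≤ -‖C x‖²`, so for every `T`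
`∫₀ᵀ ‖C x‖² ≤ V 0 - V T ≤ bᵀ P b ≤ q ‖b‖²`, using `0 ≤ P ≤ q I`.
Letting `T → ∞` bounds the output energy of each column `b = Bᵢ`, and summing over the
columns gives `q · Tr (Bᵀ B)`.
-/

open Matrix MeasureTheory Set Filter

section Calculus

variable {𝕜 ι κ : Type*} [NontriviallyNormedField 𝕜] [Fintype ι]

theorem HasDerivAt.dotProduct {f g : 𝕜 → ι → 𝕜} {f' g' : ι → 𝕜} {t : 𝕜}
    (hf : HasDerivAt f f' t) (hg : HasDerivAt g g' t) :
    HasDerivAt (fun τ => f τ ⬝ᵥ g τ) (f' ⬝ᵥ g t + f t ⬝ᵥ g') t := by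
  simp only [_root_.dotProduct, ← Finset.sum_add_distrib]
  exact HasDerivAt.fun_sum fun i _ => (hasDerivAt_pi.1 hf i).fun_mul (hasDerivAt_pi.1 hg i)

theorem HasDerivAt.mulVec [CompleteSpace 𝕜] [Fintype κ] (M : Matrix κ ι 𝕜)
    {x : 𝕜 → ι → 𝕜} {x' : ι → 𝕜} {t : 𝕜} (hx : HasDerivAt x x' t) :
    HasDerivAt (fun τ => M *ᵥ x τ) (M *ᵥ x') t :=
  ((mulVecLin M).toContinuousLinearMap.hasFDerivAt (x := x t)).comp_hasDerivAt t hx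

theorem HasDerivAt.dotProduct_mulVec_of_linear [CompleteSpace 𝕜] {A P : Matrix ι ι 𝕜}
    {x : 𝕜 → ι → 𝕜} {t : 𝕜} (hx : HasDerivAt x (A *ᵥ x t) t) :
    HasDerivAt (fun τ => x τ ⬝ᵥ P *ᵥ x τ) (x t ⬝ᵥ (Aᵀ * P + P * A) *ᵥ x t) t := by
  convert hx.dotProduct (hx.mulVec P) using 1
  rw [add_mulVec, dotProduct_add, ← mulVec_mulVec, ← mulVec_mulVec, dotProduct_transpose_mulVec,
    dotProduct_comm]

end Calculus

theorem setIntegral_Ioi_le_of_intervalIntegral_le {h : ℝ → ℝ} {a M : ℝ}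
    (hint : ∀ T, IntegrableOn h (Ioc a T)) (hnn : ∀ t ∈ Ioi a, 0 ≤ h t)
    (hbound : ∀ T, a ≤ T → ∫ τ in a..T, h τ ≤ M) :
    ∫ τ in Ioi a, h τ ≤ M := by
  have hnorm : ∀ T, a ≤ T → ∫ τ in a..T, ‖h τ‖ = ∫ τ in a..T, h τ := fun T hT =>
    intervalIntegral.integral_congr_ae <| .of_forall fun t ht =>
      Real.norm_of_nonneg (hnn t (by rw [uIoc_of_le hT] at ht; exact ht.1))
  have hIoi : IntegrableOn h (Ioi a) :=
    integrableOn_Ioi_of_intervalIntegral_norm_bounded M a hint tendsto_id <|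
      (eventually_ge_atTop a).mono fun T hT => (hnorm T hT).trans_le (hbound T hT)
  exact le_of_tendsto (intervalIntegral_tendsto_integral_Ioi a hIoi tendsto_id)
    ((eventually_ge_atTop a).mono hbound)

section Lyapunov

variable {ι κ : Type*} [Fintype ι] [Fintype κ]

theorem dotProduct_transpose_mul_self_mulVec {α : Type*} [CommSemiring α] (C : Matrix κ ι α)
    (x : ι → α) : x ⬝ᵥ (Cᵀ * C) *ᵥ x = C *ᵥ x ⬝ᵥ C *ᵥ x := by
  rw [← mulVec_mulVec, dotProduct_transpose_mulVec, dotProduct_comm]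

theorem dotProduct_mulVec_le_of_posSemidef_smul_one_sub [DecidableEq ι] {P : Matrix ι ι ℝ}
    {q : ℝ} (hPq : (q • (1 : Matrix ι ι ℝ) - P).PosSemidef) (x : ι → ℝ) :
    x ⬝ᵥ P *ᵥ x ≤ q * (x ⬝ᵥ x) := by
  have := hPq.dotProduct_mulVec_nonneg x
  rw [star_trivial, sub_mulVec, smul_mulVec, one_mulVec, dotProduct_sub, dotProduct_smul,
    smul_eq_mul] at this
  linarith

theorem mulVec_dotProduct_mulVec_le_of_lyapunov {A P : Matrix ι ι ℝ} {C : Matrix κ ι ℝ}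
    (hLyap : (-(Aᵀ * P + P * A + Cᵀ * C)).PosSemidef) (x : ι → ℝ) :
    C *ᵥ x ⬝ᵥ C *ᵥ x ≤ -(x ⬝ᵥ (Aᵀ * P + P * A) *ᵥ x) := by
  have := hLyap.dotProduct_mulVec_nonneg x
  rw [star_trivial, neg_mulVec, add_mulVec, dotProduct_neg, dotProduct_add,
    dotProduct_transpose_mul_self_mulVec] at this
  linarith

theorem intervalIntegral_output_energy_le_of_lyapunov {A P : Matrix ι ι ℝ}
    {C : Matrix κ ι ℝ} (hLyap : (-(Aᵀ * P + P * A + Cᵀ * C)).PosSemidef)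
    {x : ℝ → ι → ℝ} (hx : ∀ t, HasDerivAt x (A *ᵥ x t) t) {a b : ℝ} (hab : a ≤ b) :
    ∫ τ in a..b, C *ᵥ x τ ⬝ᵥ C *ᵥ x τ
      ≤ x a ⬝ᵥ P *ᵥ x a - x b ⬝ᵥ P *ᵥ x b := by
  have hV (t : ℝ) : HasDerivAt (fun τ => -(x τ ⬝ᵥ P *ᵥ x τ))
      (-(x t ⬝ᵥ (Aᵀ * P + P * A) *ᵥ x t)) t :=
    (hx t).dotProduct_mulVec_of_linear.neg
  have hxc : Continuous x := continuous_iff_continuousAt.2 fun t => (hx t).continuousAt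
  have hCx : Continuous fun τ => C *ᵥ x τ := continuous_const.matrix_mulVec hxc
  have := intervalIntegral.integral_le_sub_of_hasDeriv_right_of_le hab
    (fun t _ => (hV t).continuousAt.continuousWithinAt)
    (fun t _ => (hV t).hasDerivWithinAt)
    (hCx.dotProduct hCx).integrableOn_Icc
    (fun t _ => mulVec_dotProduct_mulVec_le_of_lyapunov hLyap (x t))
  linarith

attribute [local instance] Matrix.linftyOpNormedRing Matrix.linftyOpNormedAlgebra

theorem hasDerivAt_exp_smul_mulVec [DecidableEq ι] (A : Matrix ι ι ℝ) (b : ι → ℝ)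
    (t : ℝ) :
    HasDerivAt (fun τ => NormedSpace.exp (τ • A) *ᵥ b)
      (A *ᵥ (NormedSpace.exp (t • A) *ᵥ b)) t := by
  rw [mulVec_mulVec]
  exact ((mulVecBilin ℝ ℝ).flip b).toContinuousLinearMap.hasFDerivAt.comp_hasDerivAt t
    (hasDerivAt_exp_smul_const' A t)

theorem setIntegral_output_energy_le_of_lyapunov [DecidableEq ι] {A P : Matrix ι ι ℝ}
    {C : Matrix κ ι ℝ} {q : ℝ} (hP : P.PosSemidef)
    (hLyap : (-(Aᵀ * P + P * A + Cᵀ * C)).PosSemidef)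
    (hPq : (q • (1 : Matrix ι ι ℝ) - P).PosSemidef) (b : ι → ℝ) :
    ∫ τ in Ioi (0 : ℝ),
        C *ᵥ (NormedSpace.exp (τ • A) *ᵥ b) ⬝ᵥ C *ᵥ (NormedSpace.exp (τ • A) *ᵥ b)
      ≤ q * (b ⬝ᵥ b) := by
  set x : ℝ → ι → ℝ := fun τ => NormedSpace.exp (τ • A) *ᵥ b
  have hx (t : ℝ) : HasDerivAt x (A *ᵥ x t) t := hasDerivAt_exp_smul_mulVec A b t
  have hxc : Continuous x := continuous_iff_continuousAt.2 fun t => (hx t).continuousAt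
  have hCx : Continuous fun τ => C *ᵥ x τ := continuous_const.matrix_mulVec hxc
  refine setIntegral_Ioi_le_of_intervalIntegral_le
    (fun T => (hCx.dotProduct hCx).integrableOn_Ioc)
    (fun t _ => Fintype.sum_nonneg fun _ => mul_self_nonneg _) fun T hT => ?_
  have hx0 : x 0 = b := by simp [x]
  calc ∫ τ in 0..T, C *ᵥ x τ ⬝ᵥ C *ᵥ x τ
      ≤ x 0 ⬝ᵥ P *ᵥ x 0 - x T ⬝ᵥ P *ᵥ x T :=
        intervalIntegral_output_energy_le_of_lyapunov hLyap hx hT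
    _ ≤ x 0 ⬝ᵥ P *ᵥ x 0 := by simpa using hP.dotProduct_mulVec_nonneg (x T)
    _ ≤ q * (b ⬝ᵥ b) := hx0 ▸ dotProduct_mulVec_le_of_posSemidef_smul_one_sub hPq b

end Lyapunov

theorem h2_norm_bound_general {n m p : ℕ}
    (A P : Matrix (Fin n) (Fin n) ℝ) (B : Matrix (Fin n) (Fin m) ℝ)
    (C : Matrix (Fin p) (Fin n) ℝ) (q : ℝ)
    (hP : P.PosSemidef)
    (hLyap : (-(Aᵀ * P + P * A + Cᵀ * C)).PosSemidef)
    (hPq : (q • (1 : Matrix (Fin n) (Fin n) ℝ) - P).PosSemidef) :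
    ∑ i : Fin m,
      ∫ τ in Set.Ioi (0:ℝ),
        (C.mulVec ((NormedSpace.exp (τ • A)).mulVec (fun j => B j i))) ⬝ᵥ
          (C.mulVec ((NormedSpace.exp (τ • A)).mulVec (fun j => B j i)))
      ≤ q * (Bᵀ * B).trace :=
  calc _ ≤ ∑ i : Fin m, q * ((fun j => B j i) ⬝ᵥ (fun j => B j i)) :=
        Finset.sum_le_sum fun i _ => setIntegral_output_energy_le_of_lyapunov hP hLyap hPq _
    _ = q * (Bᵀ * B).trace := by rw [← Finset.mul_sum]; rfl

/-- H₂-norm bound: for Hurwitz A with AᵀP+PA+CᵀC ⪯ 0 and P ⪯ qI,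
∑ᵢ ∫₀^∞ ‖C e^{Aτ} Bᵢ‖² dτ ≤ q · Tr(BᵀB). -/
theorem h2_norm_bound {n m p : ℕ}
    (A P : Matrix (Fin n) (Fin n) ℝ) (B : Matrix (Fin n) (Fin m) ℝ)
    (C : Matrix (Fin p) (Fin n) ℝ) (q : ℝ) (hq : 0 ≤ q)
    (hHurwitz : ∀ μ ∈ spectrum ℂ (A.map (Complex.ofReal)), μ.re < 0)
    (hP : P.PosSemidef)
    (hLyap : (-(Aᵀ * P + P * A + Cᵀ * C)).PosSemidef)
    (hPq : (q • (1 : Matrix (Fin n) (Fin n) ℝ) - P).PosSemidef) :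
    ∑ i : Fin m,
      ∫ τ in Set.Ioi (0:ℝ),
        (C.mulVec ((NormedSpace.exp (τ • A)).mulVec (fun j => B j i))) ⬝ᵥ
          (C.mulVec ((NormedSpace.exp (τ • A)).mulVec (fun j => B j i)))
      ≤ q * (Bᵀ * B).trace :=
  h2_norm_bound_general A P B C q hP hLyap hPq
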